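/- Let ν > 0 and take α = ν. Then the 0-th moment of the weight is diagonal: for i ≠ j one has ∫_0^∞ (W_μ^{(ν,ν)}(x))_{i,j} dx = 0, and for each 1 ≤ j ≤ N, ∫_0^∞ (W_μ^{(ν,ν)}(x))_{j,j} dx = (μ_j² Γ(ν+j+1) / (j−1)!) · Σ_{k=1}^{j} (δ_k^{(ν)}/μ_k²) (−1)^{k+1} (−j+1)_{k−1}, where Γ is the Gamma function. -/

import Mathlib

open scoped BigOperators
open Matrix MeasureTheory

noncomputable section

/-- Pochhammer symbol `(a)_m = a(a+1)⋯(a+m-1)`. -/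
def poch (a : ℝ) (m : ℕ) : ℝ := ∏ i ∈ Finset.range m, (a + i)

/-- Generalized Laguerre polynomial `L_n^{(α)}(x)`. -/
def lagP (α : ℝ) (n : ℕ) (x : ℝ) : ℝ :=
  ∑ k ∈ Finset.range (n + 1),
    (-1 : ℝ) ^ k * poch (α + k + 1) (n - k) * x ^ k / ((n - k).factorial * k.factorial)

/-- The matrix `L_μ^{(α)}(x)`; the 0-based index pair `(i,j)` corresponds to the
1-based index pair `(i+1, j+1)` of the paper. -/
def LagMat (N : ℕ) (μ : Fin N → ℝ) (α : ℝ) (x : ℝ) : Matrix (Fin N) (Fin N) ℝ :=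
  Matrix.of fun m n : Fin N =>
    if (n : ℕ) ≤ (m : ℕ) then μ m / μ n * lagP (α + (n : ℕ) + 1) ((m : ℕ) - (n : ℕ)) x else 0

/-- The matrix `A_μ = S_μ A S_μ⁻¹`, written entrywise. -/
def AmuMat (N : ℕ) (μ : Fin N → ℝ) : Matrix (Fin N) (Fin N) ℝ :=
  Matrix.of fun i j : Fin N => if (i : ℕ) = (j : ℕ) + 1 then -(μ i / μ j) else 0

/-- `J = diag(1,…,N)`. -/
def Jmat (N : ℕ) : Matrix (Fin N) (Fin N) ℝ :=
  Matrix.diagonal fun i => ((i : ℕ) + 1 : ℝ)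

/-- `T^{(ν)}(x) = e^{-x} Σ_k δ_k x^{ν+k} E_{k,k}`. -/
def Tmat (N : ℕ) (δ : Fin N → ℝ) (ν : ℝ) (x : ℝ) : Matrix (Fin N) (Fin N) ℝ :=
  Matrix.diagonal fun k => Real.exp (-x) * δ k * x ^ (ν + (k : ℕ) + 1)

/-- The weight `W_μ^{(α,ν)}(x) = L_μ^{(α)}(x) T^{(ν)}(x) L_μ^{(α)}(x)^*`. -/
def Wmat (N : ℕ) (μ δ : Fin N → ℝ) (α ν : ℝ) (x : ℝ) : Matrix (Fin N) (Fin N) ℝ :=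
  LagMat N μ α x * Tmat N δ ν x * (LagMat N μ α x)ᵀ

/-- Entrywise evaluation of a matrix of polynomials. -/
def matPolyEval {N : ℕ} (P : Matrix (Fin N) (Fin N) (Polynomial ℝ)) (x : ℝ) :
    Matrix (Fin N) (Fin N) ℝ :=
  Matrix.of fun i j => (P i j).eval x

/-- Entrywise derivative of a matrix of polynomials. -/
def matPolyDeriv {N : ℕ} (P : Matrix (Fin N) (Fin N) (Polynomial ℝ)) :
    Matrix (Fin N) (Fin N) (Polynomial ℝ) :=
  Matrix.of fun i j => Polynomial.derivative (P i j)

/-- `P` is the monic (matrix valued) orthogonal polynomial of degree `n` w.r.t. the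
weight `W` on `(0,∞)`. -/
def MonicOrth (N : ℕ) (W : ℝ → Matrix (Fin N) (Fin N) ℝ) (n : ℕ)
    (P : Matrix (Fin N) (Fin N) (Polynomial ℝ)) : Prop :=
  (∀ i j, (P i j).degree ≤ n) ∧
  Matrix.of (fun i j => (P i j).coeff n) = (1 : Matrix (Fin N) (Fin N) ℝ) ∧
  ∀ k, k < n → ∀ i j, (∫ x in Set.Ioi (0 : ℝ), (matPolyEval P x * W x) i j * x ^ k) = 0

/-- Conditions (C1) and (C2) at level `ν`, relating `δ = δ^{(ν)}`, `δ' = δ^{(ν+1)}`,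
`c = c^{(ν)}` and `d = d^{(ν)}`. -/
def PearsonCond (N : ℕ) (μ δ δ' : Fin N → ℝ) (c d : ℝ) : Prop :=
  0 < c ∧ 0 < d ∧
  (∀ k : Fin N, δ' k = (((k : ℕ) + 1) * d + c) * δ k) ∧
  ∀ (k : Fin N) (h : (k : ℕ) + 1 < N),
    μ ⟨(k : ℕ) + 1, h⟩ ^ 2 / μ k ^ 2 =
      d * ((k : ℕ) + 1) * ((N : ℝ) - ((k : ℕ) + 1)) * δ ⟨(k : ℕ) + 1, h⟩ / δ' k

/-- `Φ^{(α,ν)}(x)` (with `c = c^{(ν)}`, `d = d^{(ν)}`). -/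
def PhiMat (N : ℕ) (μ : Fin N → ℝ) (α c d : ℝ) (x : ℝ) : Matrix (Fin N) (Fin N) ℝ :=
  ((LagMat N μ α 0)ᵀ)⁻¹ *
    (-(d * x ^ 2) • (AmuMat N μ)ᵀ + x • (d • Jmat N + c • (1 : Matrix (Fin N) (Fin N) ℝ))) *
    (LagMat N μ α 0)ᵀ

/-- `Ψ^{(α,ν)}(x)` (with `δ = δ^{(ν)}`, `δ' = δ^{(ν+1)}`, `c = c^{(ν)}`, `d = d^{(ν)}`). -/
def PsiMat (N : ℕ) (μ δ δ' : Fin N → ℝ) (α ν c d : ℝ) (x : ℝ) : Matrix (Fin N) (Fin N) ℝ :=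
  ((LagMat N μ α 0)ᵀ)⁻¹ *
    (x • (d • (Jmat N - (AmuMat N μ)ᵀ * (Jmat N + (ν + 1) • (1 : Matrix (Fin N) (Fin N) ℝ)) -
        ((N : ℝ) + 1) • (1 : Matrix (Fin N) (Fin N) ℝ)) - c • (1 : Matrix (Fin N) (Fin N) ℝ)) +
      (Jmat N + (ν + 1) • (1 : Matrix (Fin N) (Fin N) ℝ)) *
        (d • Jmat N + c • (1 : Matrix (Fin N) (Fin N) ℝ)) +
      (Matrix.diagonal δ)⁻¹ * AmuMat N μ * Matrix.diagonal δ') *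
    (LagMat N μ α 0)ᵀ

/-- `K_n^{(β,ν)}` (with `c = c^{(ν)}`, `d = d^{(ν)}`). -/
def Kmat (N : ℕ) (μ : Fin N → ℝ) (β ν c d : ℝ) (n : ℕ) : Matrix (Fin N) (Fin N) ℝ :=
  LagMat N μ β 0 *
    (d • (Jmat N - (Jmat N + (ν + n) • (1 : Matrix (Fin N) (Fin N) ℝ)) * AmuMat N μ -
      ((N : ℝ) + 1) • (1 : Matrix (Fin N) (Fin N) ℝ)) - c • (1 : Matrix (Fin N) (Fin N) ℝ)) *
    (LagMat N μ β 0)⁻¹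

/-- `(Q D^{(α,ν)})(x)` for a matrix valued polynomial `Q`. -/
def Dapply (N : ℕ) (μ : Fin N → ℝ) (α ν : ℝ)
    (Q : Matrix (Fin N) (Fin N) (Polynomial ℝ)) (x : ℝ) : Matrix (Fin N) (Fin N) ℝ :=
  x • matPolyEval (matPolyDeriv (matPolyDeriv Q)) x +
    matPolyEval (matPolyDeriv Q) x *
      ((-x) • (AmuMat N μ + 1)⁻¹ + (ν + 1) • (1 : Matrix (Fin N) (Fin N) ℝ) + Jmat N +
        (α • (1 : Matrix (Fin N) (Fin N) ℝ) + Jmat N) * AmuMat N μ) +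
    matPolyEval Q x * ((α - ν) • (AmuMat N μ + 1)⁻¹ - Jmat N)

/-! For `α = ν` the Laguerre parameter of column `k` of `L_μ^{(ν)}` equals the exponent
`p_k = ν + k + 1` of the `k`-th diagonal entry of `T^{(ν)}`, so `W i j` is a sum over `k ≤ min i j`
of `(μ i μ j / μ k²) δ k e^{-x} x^{p_k} L_{i-k}^{(p_k)} L_{j-k}^{(p_k)}`. Orthogonality of the
Laguerre polynomials for `e^{-x} x^p` on `(0, ∞)`, with squared norms `Γ(p + n + 1) / n!`, kills
every term with `i ≠ j` and leaves `Γ(ν + j + 2) / (j - k)!` on the diagonal, which is the claim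
since `(-1)^k (-j)_k = j! / (j - k)!`.

Orthogonality comes from `∫ e^{-x} x^{p+a} = Γ(p + a + 1)`: expanding `L_n^{(p)}` into monomials,
`∫ e^{-x} x^{p+j} L_n^{(p)} = Γ(p + n + 1) / n! · ∑_k (-1)^k C(n, k) (p + 1 + k)_j`, an `n`-th
finite difference of a polynomial of degree `j` in `k`: zero for `j < n`, `(-1)^n n!` for `j = n`. -/

open Real Set Finset Polynomial
open scoped Nat

lemma poch_eq_ascPochhammer_eval (a : ℝ) (m : ℕ) : poch a m = (ascPochhammer ℝ m).eval a := by
  induction m with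
  | zero => simp [poch]
  | succ m ih => rw [poch, prod_range_succ, ← poch, ih, ascPochhammer_succ_right]; simp

lemma neg_one_pow_mul_poch_neg_natCast (j k : ℕ) :
    (-1) ^ k * poch (-(j : ℝ)) k = j.descFactorial k := by
  rw [poch_eq_ascPochhammer_eval, ascPochhammer_eval_neg_eq_descPochhammer,
    descPochhammer_eval_eq_descFactorial, ← mul_assoc, ← mul_pow]
  norm_num

lemma Real.Gamma_add_nat_eq_poch_mul {x : ℝ} (hx : 0 < x) (m : ℕ) :
    Gamma (x + m) = poch x m * Gamma x := by
  induction m with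
  | zero => simp [poch]
  | succ m ih =>
    rw [Nat.cast_succ, ← add_assoc, Gamma_add_one (by positivity), ih]
    simp only [poch, prod_range_succ]
    ring

theorem Polynomial.sum_range_neg_one_pow_mul_choose_mul_eval {R : Type*} [CommRing R] {P : R[X]}
    {n : ℕ} (hP : P.natDegree ≤ n) :
    ∑ k ∈ range (n + 1), (-1) ^ k * n.choose k * P.eval (k : R) = (-1) ^ n * n ! * P.coeff n := by
  have hΔ : (fwdDiff 1)^[n] P.eval 0 = P.coeff n * n ! := by
    rcases hP.lt_or_eq with hlt | rfl
    · rw [fwdDiff_iter_eq_zero_of_degree_lt hlt, coeff_eq_zero_of_natDegree_lt hlt]; simp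
    · rw [fwdDiff_iter_degree_eq_factorial, Pi.smul_apply, smul_eq_mul, leadingCoeff]; rfl
  rw [fwdDiff_iter_eq_sum_shift] at hΔ
  rw [mul_assoc, mul_comm (n ! : R), ← hΔ, mul_sum]
  refine sum_congr rfl fun k hk => ?_
  have hkn : (-1 : R) ^ k = (-1) ^ n * (-1) ^ (n - k) := by
    obtain ⟨d, rfl⟩ := Nat.exists_eq_add_of_le (Nat.lt_succ_iff.mp (mem_range.mp hk))
    rw [Nat.add_sub_cancel_left, pow_add, mul_assoc, ← pow_add, Even.neg_one_pow ⟨d, rfl⟩, mul_one]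
  simp only [zsmul_eq_mul, Int.cast_mul, Int.cast_pow, Int.cast_neg, Int.cast_one, Int.cast_natCast,
    nsmul_eq_mul, mul_one, zero_add, hkn]
  ring

lemma sum_range_neg_one_pow_mul_choose_mul_poch (c : ℝ) {n j : ℕ} (hj : j ≤ n) :
    ∑ k ∈ range (n + 1), (-1) ^ k * n.choose k * poch (c + k) j =
      if j = n then (-1 : ℝ) ^ n * n ! else 0 := by
  set P := (ascPochhammer ℝ j).comp (X + C c)
  have hmonic : P.Monic := (monic_ascPochhammer ℝ j).comp_X_add_C c
  have hdeg : P.natDegree = j := by simp [P, natDegree_comp, ascPochhammer_natDegree]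
  have hP : ∀ k : ℕ, poch (c + k) j = P.eval (k : ℝ) := fun k => by
    simp [P, poch_eq_ascPochhammer_eval, eval_comp, add_comm]
  simp only [hP, sum_range_neg_one_pow_mul_choose_mul_eval (hdeg.trans_le hj)]
  split_ifs with h
  · subst h; rw [← hdeg, hmonic.coeff_natDegree, mul_one]
  · rw [coeff_eq_zero_of_natDegree_lt (by omega), mul_zero]

lemma integrableOn_Ioi_exp_neg_mul_rpow {t : ℝ} (ht : -1 < t) :
    IntegrableOn (fun x => exp (-x) * x ^ t) (Ioi 0) := by
  simpa using GammaIntegral_convergent (s := t + 1) (by linarith)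

lemma integral_Ioi_exp_neg_mul_rpow {t : ℝ} (ht : -1 < t) :
    ∫ x in Ioi 0, exp (-x) * x ^ t = Gamma (t + 1) := by
  simp [Gamma_eq_integral (by linarith : 0 < t + 1)]

section SumPow

variable {ι : Type*} {p : ℝ} (s : Finset ι) (c : ι → ℝ) (e : ι → ℕ)

lemma exp_neg_mul_rpow_mul_sum_pow {x : ℝ} (hx : 0 < x) :
    exp (-x) * x ^ p * ∑ i ∈ s, c i * x ^ e i = ∑ i ∈ s, c i * (exp (-x) * x ^ (p + e i)) := by
  rw [mul_sum]
  refine sum_congr rfl fun i _ => ?_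
  rw [rpow_add hx, rpow_natCast]
  ring

lemma integrableOn_exp_neg_mul_rpow_mul_sum_pow (hp : -1 < p) :
    IntegrableOn (fun x => exp (-x) * x ^ p * ∑ i ∈ s, c i * x ^ e i) (Ioi 0) := by
  refine IntegrableOn.congr_fun ?_ (fun x hx => (exp_neg_mul_rpow_mul_sum_pow s c e hx).symm)
    measurableSet_Ioi
  exact integrable_finsetSum _ fun i _ =>
    (integrableOn_Ioi_exp_neg_mul_rpow (by have := (e i).cast_nonneg (α := ℝ); linarith)).const_mul _

lemma integral_exp_neg_mul_rpow_mul_sum_pow (hp : -1 < p) :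
    ∫ x in Ioi 0, exp (-x) * x ^ p * ∑ i ∈ s, c i * x ^ e i =
      ∑ i ∈ s, c i * Gamma (p + e i + 1) := by
  have he : ∀ i, -1 < p + e i := fun i => by have := (e i).cast_nonneg (α := ℝ); linarith
  rw [setIntegral_congr_fun measurableSet_Ioi (fun x hx => exp_neg_mul_rpow_mul_sum_pow s c e hx),
    integral_finsetSum _ fun i _ => (integrableOn_Ioi_exp_neg_mul_rpow (he i)).const_mul _]
  exact sum_congr rfl fun i _ => by rw [integral_const_mul, integral_Ioi_exp_neg_mul_rpow (he i)]

end SumPow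

def lagCoeff (α : ℝ) (n k : ℕ) : ℝ :=
  (-1) ^ k * poch (α + k + 1) (n - k) / ((n - k)! * k !)

lemma lagP_eq_sum_lagCoeff (α : ℝ) (n : ℕ) (x : ℝ) :
    lagP α n x = ∑ k ∈ range (n + 1), lagCoeff α n k * x ^ k := by
  simp only [lagP, lagCoeff]
  exact sum_congr rfl fun k _ => by ring

lemma lagCoeff_self (α : ℝ) (n : ℕ) : lagCoeff α n n = (-1) ^ n / n ! := by
  simp [lagCoeff, poch]

lemma lagP_mul_lagP_eq_sum (α : ℝ) (m n : ℕ) (x : ℝ) :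
    lagP α m x * lagP α n x = ∑ ab ∈ range (m + 1) ×ˢ range (n + 1),
      lagCoeff α m ab.1 * lagCoeff α n ab.2 * x ^ (ab.1 + ab.2) := by
  rw [lagP_eq_sum_lagCoeff, lagP_eq_sum_lagCoeff, sum_mul_sum, sum_product]
  exact sum_congr rfl fun a _ => sum_congr rfl fun b _ => by ring

lemma integrableOn_exp_neg_mul_rpow_mul_lagP_mul_lagP {p : ℝ} (hp : -1 < p) (α : ℝ) (m n : ℕ) :
    IntegrableOn (fun x => exp (-x) * x ^ p * (lagP α m x * lagP α n x)) (Ioi 0) := by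
  simp_rw [lagP_mul_lagP_eq_sum]
  exact integrableOn_exp_neg_mul_rpow_mul_sum_pow _ _ _ hp

lemma sum_lagCoeff_mul_Gamma {p : ℝ} (hp : -1 < p) {j n : ℕ} (hj : j ≤ n) :
    ∑ k ∈ range (n + 1), lagCoeff p n k * Gamma (p + (j + k : ℕ) + 1) =
      if j = n then (-1) ^ n * Gamma (p + n + 1) else 0 := by
  have hterm : ∀ k ∈ range (n + 1), lagCoeff p n k * Gamma (p + (j + k : ℕ) + 1) =
      Gamma (p + n + 1) / n ! * ((-1) ^ k * n.choose k * poch (p + 1 + k) j) := by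
    intro k hk
    have hkn : k ≤ n := Nat.lt_succ_iff.mp (mem_range.mp hk)
    have hx : 0 < p + k + 1 := by have := k.cast_nonneg (α := ℝ); linarith
    have hGj := Gamma_add_nat_eq_poch_mul hx j
    have hGn := Gamma_add_nat_eq_poch_mul hx (n - k)
    rw [Nat.cast_sub hkn] at hGn
    rw [show p + k + 1 + (j : ℝ) = p + (j + k : ℕ) + 1 by push_cast; ring] at hGj
    rw [show p + k + 1 + ((n : ℝ) - k) = p + n + 1 by ring] at hGn
    rw [hGj, hGn, lagCoeff, show p + 1 + (k : ℝ) = p + k + 1 by ring, Nat.cast_choose ℝ hkn]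
    field_simp
  rw [sum_congr rfl hterm, ← mul_sum, sum_range_neg_one_pow_mul_choose_mul_poch _ hj]
  split_ifs
  · field_simp
  · rw [mul_zero]

lemma integral_exp_neg_mul_rpow_mul_lagP_mul_lagP_of_le {p : ℝ} (hp : -1 < p) {m n : ℕ}
    (hmn : m ≤ n) :
    ∫ x in Ioi 0, exp (-x) * x ^ p * (lagP p m x * lagP p n x) =
      if m = n then Gamma (p + n + 1) / n ! else 0 := by
  simp_rw [lagP_mul_lagP_eq_sum]
  rw [integral_exp_neg_mul_rpow_mul_sum_pow _ _ _ hp, sum_product]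
  simp_rw [mul_assoc, ← mul_sum]
  rw [sum_congr rfl fun a ha => by
    rw [sum_lagCoeff_mul_Gamma hp ((Nat.lt_succ_iff.mp (mem_range.mp ha)).trans hmn)]]
  simp only [mul_ite, mul_zero, sum_ite_eq', Finset.mem_range, Nat.lt_succ_iff]
  rcases hmn.eq_or_lt with rfl | hlt
  · rw [if_pos le_rfl, if_pos rfl, lagCoeff_self]
    field_simp
    rw [← pow_mul, Even.neg_one_pow ⟨m, by ring⟩, one_mul]
  · rw [if_neg hlt.not_ge, if_neg hlt.ne]

theorem integral_exp_neg_mul_rpow_mul_lagP_mul_lagP {p : ℝ} (hp : -1 < p) (m n : ℕ) :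
    ∫ x in Ioi 0, exp (-x) * x ^ p * (lagP p m x * lagP p n x) =
      if m = n then Gamma (p + n + 1) / n ! else 0 := by
  rcases le_total m n with hmn | hnm
  · exact integral_exp_neg_mul_rpow_mul_lagP_mul_lagP_of_le hp hmn
  · simp_rw [mul_comm (lagP p m _)]
    rw [integral_exp_neg_mul_rpow_mul_lagP_mul_lagP_of_le hp hnm]
    by_cases h : m = n
    · subst h; rfl
    · rw [if_neg (Ne.symm h), if_neg h]

lemma Wmat_apply {N : ℕ} (μ δ : Fin N → ℝ) (α ν x : ℝ) (i j : Fin N) :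
    Wmat N μ δ α ν x i j = ∑ k ∈ Iic (min i j), μ i * μ j / μ k ^ 2 * δ k *
      (exp (-x) * x ^ (ν + (k : ℕ) + 1) *
        (lagP (α + (k : ℕ) + 1) (i - k) x * lagP (α + (k : ℕ) + 1) (j - k) x)) := by
  rw [← filter_ge_eq_Iic, sum_filter, Wmat, mul_apply]
  simp only [Tmat, mul_diagonal, transpose_apply, LagMat, of_apply]
  refine sum_congr rfl fun k _ => ?_
  simp only [le_min_iff, ← Fin.val_fin_le]
  split_ifs <;> first | tauto | ring

lemma integral_Wmat_apply {N : ℕ} (μ δ : Fin N → ℝ) {ν : ℝ} (hν : -2 < ν) (i j : Fin N) :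
    ∫ x in Ioi 0, Wmat N μ δ ν ν x i j = ∑ k ∈ Iic (min i j), μ i * μ j / μ k ^ 2 * δ k *
      if i = j then Gamma (ν + (i : ℕ) + 2) / ((i : ℕ) - k)! else 0 := by
  have hp : ∀ k : Fin N, -1 < ν + (k : ℕ) + 1 := fun k => by
    have := (k : ℕ).cast_nonneg (α := ℝ); linarith
  simp_rw [Wmat_apply]
  rw [integral_finsetSum _ fun k _ =>
    ((integrableOn_exp_neg_mul_rpow_mul_lagP_mul_lagP (hp k) _ _ _).const_mul _)]
  refine sum_congr rfl fun k hk => ?_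
  have hki : (k : ℕ) ≤ i := Fin.le_def.mp (le_min_iff.mp (mem_Iic.mp hk)).1
  have hkj : (k : ℕ) ≤ j := Fin.le_def.mp (le_min_iff.mp (mem_Iic.mp hk)).2
  rw [integral_const_mul, integral_exp_neg_mul_rpow_mul_lagP_mul_lagP (hp k)]
  congr 1
  by_cases hij : i = j
  · subst hij
    rw [if_pos rfl, if_pos rfl, Nat.cast_sub hki]
    ring_nf
  · rw [if_neg (fun h => hij (Fin.ext (by omega))), if_neg hij]

theorem zeroth_moment_general (N : ℕ) (μ : Fin N → ℝ)
    (ν : ℝ) (hν : 0 < ν) (δ : Fin N → ℝ) :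
    (∀ i j : Fin N, i ≠ j → (∫ x in Set.Ioi (0 : ℝ), Wmat N μ δ ν ν x i j) = 0) ∧
    ∀ j : Fin N, (∫ x in Set.Ioi (0 : ℝ), Wmat N μ δ ν ν x j j) =
      μ j ^ 2 * Real.Gamma (ν + (j : ℕ) + 2) / (j : ℕ).factorial *
        ∑ k ∈ Finset.Iic j,
          δ k / μ k ^ 2 * (-1 : ℝ) ^ (k : ℕ) * poch (-((j : ℕ) : ℝ)) (k : ℕ) := by
  have hν' : -2 < ν := by linarith
  refine ⟨fun i j hij => ?_, fun j => ?_⟩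
  · rw [integral_Wmat_apply μ δ hν' i j]
    exact sum_eq_zero fun k _ => by rw [if_neg hij, mul_zero]
  · rw [integral_Wmat_apply μ δ hν' j j, min_self, mul_sum]
    refine sum_congr rfl fun k hk => ?_
    have hkj : (k : ℕ) ≤ j := Fin.le_def.mp (mem_Iic.mp hk)
    have hfac : ((j - k : ℕ)! : ℝ) * (j : ℕ).descFactorial k = (j : ℕ)! := by
      exact_mod_cast Nat.factorial_mul_descFactorial hkj
    have hdesc : ((j : ℕ).descFactorial k : ℝ) ≠ 0 :=
      Nat.cast_ne_zero.mpr (Nat.descFactorial_eq_zero_iff_lt.not.mpr hkj.not_gt)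
    rw [if_pos rfl, mul_assoc _ _ (poch _ _), neg_one_pow_mul_poch_neg_natCast, ← hfac]
    field_simp

/-- the 0-th moment for `α = ν` is diagonal, with explicit diagonal entries. -/
theorem zeroth_moment (N : ℕ) (hN : 1 ≤ N) (μ : Fin N → ℝ) (hμ : ∀ k, μ k ≠ 0)
    (ν : ℝ) (hν : 0 < ν) (δ : Fin N → ℝ) (hδ : ∀ k, 0 < δ k) :
    (∀ i j : Fin N, i ≠ j → (∫ x in Set.Ioi (0 : ℝ), Wmat N μ δ ν ν x i j) = 0) ∧
    ∀ j : Fin N, (∫ x in Set.Ioi (0 : ℝ), Wmat N μ δ ν ν x j j) =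
      μ j ^ 2 * Real.Gamma (ν + (j : ℕ) + 2) / (j : ℕ).factorial *
        ∑ k ∈ Finset.Iic j,
          δ k / μ k ^ 2 * (-1 : ℝ) ^ (k : ℕ) * poch (-((j : ℕ) : ℝ)) (k : ℕ) :=
  zeroth_moment_general N μ ν hν δ
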